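/- High-temperature representation of Ising correlations: for the Ising model on a finite edge set B with coupling β, for any A ⊂ V_B with |A| even, ⟨σ_A⟩_{B,β} = [Σ_{D⊂B, ∂D=A} (tanh β)^{|D|}] / [Σ_{D⊂B, ∂D=∅} (tanh β)^{|D|}], where ∂D is the set of vertices incident to an odd number of edges of D. -/
import Mathlib


/-- The vertex set of a finite set of edges. -/
def edgeVerts {d : ℕ} (B : Finset ((Fin d → ℤ) × (Fin d → ℤ))) : Finset (Fin d → ℤ) :=
  B.image Prod.fst ∪ B.image Prod.snd

/-- The index of a vertex in an edge set: the number of edges containing it. -/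
def edgeInd {d : ℕ} (x : Fin d → ℤ) (D : Finset ((Fin d → ℤ) × (Fin d → ℤ))) : ℕ :=
  (D.filter (fun e => e.1 = x ∨ e.2 = x)).card

/-- The boundary `∂D`: vertices incident to an odd number of edges of `D`. -/
def edgeBdry {d : ℕ} (D : Finset ((Fin d → ℤ) × (Fin d → ℤ))) : Finset (Fin d → ℤ) :=
  (edgeVerts D).filter (fun x => edgeInd x D % 2 = 1)

/-- The spin at site `x` of a configuration on the vertex set of `B`. -/
noncomputable def isingSpin {d : ℕ} (Λ : Finset (Fin d → ℤ))
    (σ : {x // x ∈ Λ} → Bool) (x : Fin d → ℤ) : ℝ :=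
  if h : x ∈ Λ then (if σ ⟨x, h⟩ then 1 else -1) else 1

namespace IsingHT

variable {d : ℕ}

lemma spin_cases (Λ : Finset (Fin d → ℤ)) (σ : {x // x ∈ Λ} → Bool) (x : Fin d → ℤ) :
    isingSpin Λ σ x = 1 ∨ isingSpin Λ σ x = -1 := by
  unfold isingSpin; split_ifs <;> simp

lemma exp_pm (β s : ℝ) (hs : s = 1 ∨ s = -1) :
    Real.exp (β * s) = Real.cosh β * (1 + s * Real.tanh β) := by
  have hc := (Real.cosh_pos β).ne'
  have h1 : Real.cosh β * Real.tanh β = Real.sinh β := by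
    rw [Real.tanh_eq_sinh_div_cosh]; field_simp
  rcases hs with h | h <;> subst h
  · rw [mul_one, mul_add, mul_one, one_mul, h1, Real.cosh_add_sinh]
  · rw [mul_neg_one, show (1 + -1 * Real.tanh β) = 1 - Real.tanh β by ring,
      mul_sub, mul_one, h1, Real.cosh_sub_sinh]

lemma sum_bool_pow (n : ℕ) :
    (∑ b : Bool, (if b then (1:ℝ) else -1) ^ n) = if n % 2 = 0 then 2 else 0 := by
  have : (∑ b : Bool, (if b then (1:ℝ) else -1) ^ n) = 1 + (-1)^n := by
    simp [Fintype.sum_bool]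
  rw [this]
  rcases Nat.even_or_odd n with h | h
  · rw [h.neg_one_pow, if_pos (Nat.even_iff.mp h)]; norm_num
  · rw [h.neg_one_pow, if_neg (by simp [Nat.odd_iff.mp h])]; norm_num

lemma mem_edgeVerts {D : Finset ((Fin d → ℤ) × (Fin d → ℤ))} {x : Fin d → ℤ} :
    x ∈ edgeVerts D ↔ ∃ e ∈ D, e.1 = x ∨ e.2 = x := by
  simp only [edgeVerts, Finset.mem_union, Finset.mem_image]
  constructor
  · rintro (⟨e, he, rfl⟩ | ⟨e, he, rfl⟩)
    · exact ⟨e, he, Or.inl rfl⟩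
    · exact ⟨e, he, Or.inr rfl⟩
  · rintro ⟨e, he, rfl | rfl⟩
    · exact Or.inl ⟨e, he, rfl⟩
    · exact Or.inr ⟨e, he, rfl⟩

lemma edgeVerts_mono {D B : Finset ((Fin d → ℤ) × (Fin d → ℤ))} (h : D ⊆ B) :
    edgeVerts D ⊆ edgeVerts B := by
  intro x hx
  rw [mem_edgeVerts] at hx ⊢
  obtain ⟨e, he, hx⟩ := hx
  exact ⟨e, h he, hx⟩

lemma edgeInd_pos_mem {D : Finset ((Fin d → ℤ) × (Fin d → ℤ))} {x : Fin d → ℤ}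
    (h : edgeInd x D ≠ 0) : x ∈ edgeVerts D := by
  unfold edgeInd at h
  obtain ⟨e, he⟩ := Finset.card_ne_zero.mp h
  rw [Finset.mem_filter] at he
  exact mem_edgeVerts.mpr ⟨e, he.1, he.2⟩

lemma edgeInd_eq_zero {D : Finset ((Fin d → ℤ) × (Fin d → ℤ))} {x : Fin d → ℤ}
    (h : x ∉ edgeVerts D) : edgeInd x D = 0 := by
  by_contra hc; exact h (edgeInd_pos_mem hc)

lemma mem_edgeBdry {D : Finset ((Fin d → ℤ) × (Fin d → ℤ))} {x : Fin d → ℤ} :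
    x ∈ edgeBdry D ↔ edgeInd x D % 2 = 1 := by
  constructor
  · intro h; exact (Finset.mem_filter.mp h).2
  · intro h
    refine Finset.mem_filter.mpr ⟨edgeInd_pos_mem ?_, h⟩
    omega

lemma edgeInd_insert (x : Fin d → ℤ) (e : (Fin d → ℤ) × (Fin d → ℤ))
    (D : Finset ((Fin d → ℤ) × (Fin d → ℤ))) (he : e ∉ D) :
    edgeInd x (insert e D) = (if e.1 = x ∨ e.2 = x then 1 else 0) + edgeInd x D := by
  unfold edgeInd
  rw [Finset.filter_insert]
  split_ifs with h
  · rw [Finset.card_insert_of_notMem (fun hc => he (Finset.mem_filter.mp hc).1)]; omega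
  · simp

end IsingHT

namespace IsingHT

variable {d : ℕ}

lemma prod_pow_ite (f : (Fin d → ℤ) → ℝ) (V : Finset (Fin d → ℤ))
    (p : (Fin d → ℤ) → Prop) [DecidablePred p] :
    ∏ x ∈ V, f x ^ (if p x then 1 else 0) = ∏ x ∈ V.filter p, f x := by
  rw [Finset.prod_filter]
  refine Finset.prod_congr rfl (fun x _ => ?_)
  split_ifs <;> simp

lemma prod_edges (f : (Fin d → ℤ) → ℝ) (V : Finset (Fin d → ℤ))
    (D : Finset ((Fin d → ℤ) × (Fin d → ℤ)))
    (hD : ∀ e ∈ D, e.1 ≠ e.2 ∧ e.1 ∈ V ∧ e.2 ∈ V) :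
    ∏ e ∈ D, f e.1 * f e.2 = ∏ x ∈ V, f x ^ edgeInd x D := by
  classical
  induction D using Finset.induction_on with
  | empty => simp [edgeInd]
  | @insert e D he ih =>
    have hDe : ∀ e' ∈ D, e'.1 ≠ e'.2 ∧ e'.1 ∈ V ∧ e'.2 ∈ V :=
      fun e' h' => hD e' (Finset.mem_insert_of_mem h')
    obtain ⟨hne, h1, h2⟩ := hD e (Finset.mem_insert_self e D)
    rw [Finset.prod_insert he, ih hDe]
    have : ∀ x ∈ V, f x ^ edgeInd x (insert e D)
        = f x ^ (if e.1 = x ∨ e.2 = x then 1 else 0) * f x ^ edgeInd x D := by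
      intro x _
      rw [edgeInd_insert x e D he, pow_add]
    rw [Finset.prod_congr rfl this, Finset.prod_mul_distrib,
      prod_pow_ite f V (fun x => e.1 = x ∨ e.2 = x)]
    congr 1
    have hV : V.filter (fun x => e.1 = x ∨ e.2 = x) = {e.1, e.2} := by
      ext y
      simp only [Finset.mem_filter, Finset.mem_insert, Finset.mem_singleton]
      constructor
      · rintro ⟨_, rfl | rfl⟩
        · left; rfl
        · right; rfl
      · rintro (rfl | rfl)
        · exact ⟨h1, Or.inl rfl⟩
        · exact ⟨h2, Or.inr rfl⟩
    rw [hV, Finset.prod_pair hne]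

lemma prod_subset_pow (f : (Fin d → ℤ) → ℝ) (A V : Finset (Fin d → ℤ)) (hA : A ⊆ V) :
    ∏ x ∈ A, f x = ∏ x ∈ V, f x ^ (if x ∈ A then 1 else 0) := by
  rw [prod_pow_ite f V (fun x => x ∈ A), Finset.filter_mem_eq_inter,
    Finset.inter_eq_right.mpr hA]

lemma sum_spins (V : Finset (Fin d → ℤ)) (n : (Fin d → ℤ) → ℕ) :
    ∑ σ : {x // x ∈ V} → Bool, ∏ x ∈ V, (isingSpin V σ x) ^ n x
      = if ∀ x ∈ V, n x % 2 = 0 then (2:ℝ) ^ V.card else 0 := by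
  classical
  have h1 : ∀ σ : {x // x ∈ V} → Bool, ∏ x ∈ V, (isingSpin V σ x) ^ n x
      = ∏ x : {x // x ∈ V}, (if σ x then (1:ℝ) else -1) ^ n x.val := by
    intro σ
    rw [← Finset.prod_attach V (fun x => (isingSpin V σ x) ^ n x)]
    refine Finset.prod_congr rfl (fun x _ => ?_)
    simp [isingSpin, x.2]
  simp_rw [h1]
  have hps := Finset.prod_univ_sum (fun _ : {x // x ∈ V} => (Finset.univ : Finset Bool))
    (fun i b => (if b then (1:ℝ) else -1) ^ n i.val)
  rw [Fintype.piFinset_univ] at hps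
  rw [← hps]
  have h2 : ∀ x : {x // x ∈ V}, (∑ b : Bool, (if b then (1:ℝ) else -1) ^ n x.val)
      = if n x.val % 2 = 0 then 2 else 0 := fun x => sum_bool_pow (n x.val)
  rw [Finset.prod_congr rfl (fun x _ => h2 x)]
  by_cases h : ∀ x ∈ V, n x % 2 = 0
  · rw [if_pos h]
    rw [Finset.prod_congr rfl (fun (x : {x // x ∈ V}) _ => if_pos (h x.val x.2))]
    simp [Finset.card_univ]
  · rw [if_neg h]
    push_neg at h
    obtain ⟨x, hx, hodd⟩ := h
    exact Finset.prod_eq_zero (Finset.mem_univ (⟨x, hx⟩ : {x // x ∈ V}))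
      (if_neg hodd)

lemma bdry_eq_iff (B D : Finset ((Fin d → ℤ) × (Fin d → ℤ))) (hD : D ⊆ B)
    (A : Finset (Fin d → ℤ)) (hA : A ⊆ edgeVerts B) :
    edgeBdry D = A ↔
      ∀ x ∈ edgeVerts B, ((if x ∈ A then 1 else 0) + edgeInd x D) % 2 = 0 := by
  constructor
  · intro h x _
    by_cases hxA : x ∈ A
    · have hb : x ∈ edgeBdry D := h ▸ hxA
      rw [mem_edgeBdry] at hb
      simp only [if_pos hxA]
      omega
    · have hb : x ∉ edgeBdry D := fun hc => hxA (h ▸ hc)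
      rw [mem_edgeBdry] at hb
      simp only [if_neg hxA]
      omega
  · intro h
    ext x
    rw [mem_edgeBdry]
    by_cases hx : x ∈ edgeVerts B
    · have := h x hx
      by_cases hxA : x ∈ A
      · simp only [if_pos hxA] at this
        constructor
        · intro _; exact hxA
        · intro _; omega
      · simp only [if_neg hxA] at this
        constructor
        · intro hc; omega
        · intro hc; exact absurd hc hxA
    · have h0 : edgeInd x D = 0 :=
        edgeInd_eq_zero (fun hc => hx (edgeVerts_mono hD hc))
      simp only [h0]
      constructor
      · intro hc; omega
      · intro hc; exact absurd (hA hc) hx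

end IsingHT

namespace IsingHT

variable {d : ℕ}

lemma mul_pm {a b : ℝ} (ha : a = 1 ∨ a = -1) (hb : b = 1 ∨ b = -1) :
    a * b = 1 ∨ a * b = -1 := by
  rcases ha with rfl | rfl <;> rcases hb with rfl | rfl <;> norm_num

lemma expand (β : ℝ) (B : Finset ((Fin d → ℤ) × (Fin d → ℤ)))
    (hB : ∀ e ∈ B, e.1 ≠ e.2) (A : Finset (Fin d → ℤ)) (hA : A ⊆ edgeVerts B) :
    (∑ σ : {x // x ∈ edgeVerts B} → Bool,
        (∏ x ∈ A, isingSpin (edgeVerts B) σ x) *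
          Real.exp (β * ∑ e ∈ B,
            isingSpin (edgeVerts B) σ e.1 * isingSpin (edgeVerts B) σ e.2))
    = Real.cosh β ^ B.card * 2 ^ (edgeVerts B).card *
        ∑ D ∈ B.powerset.filter (fun D => edgeBdry D = A), Real.tanh β ^ D.card := by
  classical
  set V := edgeVerts B with hV
  have hexp : ∀ σ : {x // x ∈ V} → Bool,
      Real.exp (β * ∑ e ∈ B, isingSpin V σ e.1 * isingSpin V σ e.2)
      = Real.cosh β ^ B.card *
          ∑ D ∈ B.powerset, (∏ e ∈ D, isingSpin V σ e.1 * isingSpin V σ e.2)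
            * Real.tanh β ^ D.card := by
    intro σ
    rw [Finset.mul_sum, Real.exp_sum]
    have hterm : ∀ e ∈ B, Real.exp (β * (isingSpin V σ e.1 * isingSpin V σ e.2))
        = Real.cosh β *
            (isingSpin V σ e.1 * isingSpin V σ e.2 * Real.tanh β + 1) := by
      intro e _
      rw [exp_pm β _ (mul_pm (spin_cases V σ e.1) (spin_cases V σ e.2))]
      ring
    rw [Finset.prod_congr rfl hterm, Finset.prod_mul_distrib, Finset.prod_const,
      Finset.prod_add]
    congr 1
    refine Finset.sum_congr rfl (fun D _ => ?_)
    rw [Finset.prod_const_one, mul_one, Finset.prod_mul_distrib, Finset.prod_const]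
  have step1 : (∑ σ : {x // x ∈ V} → Bool,
      (∏ x ∈ A, isingSpin V σ x) *
        Real.exp (β * ∑ e ∈ B, isingSpin V σ e.1 * isingSpin V σ e.2))
      = ∑ D ∈ B.powerset, Real.cosh β ^ B.card * (Real.tanh β ^ D.card *
          ∑ σ : {x // x ∈ V} → Bool, (∏ x ∈ A, isingSpin V σ x) *
            ∏ e ∈ D, isingSpin V σ e.1 * isingSpin V σ e.2) := by
    have e1 : ∀ σ : {x // x ∈ V} → Bool,
        (∏ x ∈ A, isingSpin V σ x) *
          Real.exp (β * ∑ e ∈ B, isingSpin V σ e.1 * isingSpin V σ e.2)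
        = ∑ D ∈ B.powerset, Real.cosh β ^ B.card * (Real.tanh β ^ D.card *
            ((∏ x ∈ A, isingSpin V σ x) *
              ∏ e ∈ D, isingSpin V σ e.1 * isingSpin V σ e.2)) := by
      intro σ
      rw [hexp σ, Finset.mul_sum, Finset.mul_sum]
      exact Finset.sum_congr rfl (fun D _ => by ring)
    rw [Finset.sum_congr rfl (fun σ _ => e1 σ), Finset.sum_comm]
    refine Finset.sum_congr rfl (fun D _ => ?_)
    rw [Finset.mul_sum, Finset.mul_sum]
  have inner : ∀ D ∈ B.powerset,
      (∑ σ : {x // x ∈ V} → Bool, (∏ x ∈ A, isingSpin V σ x) *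
          ∏ e ∈ D, isingSpin V σ e.1 * isingSpin V σ e.2)
      = if edgeBdry D = A then (2:ℝ) ^ V.card else 0 := by
    intro D hD
    rw [Finset.mem_powerset] at hD
    have hprod : ∀ σ : {x // x ∈ V} → Bool,
        (∏ x ∈ A, isingSpin V σ x) *
          ∏ e ∈ D, isingSpin V σ e.1 * isingSpin V σ e.2
        = ∏ x ∈ V, isingSpin V σ x ^ ((if x ∈ A then 1 else 0) + edgeInd x D) := by
      intro σ
      have hDe : ∀ e ∈ D, e.1 ≠ e.2 ∧ e.1 ∈ V ∧ e.2 ∈ V := by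
        intro e he
        exact ⟨hB e (hD he), mem_edgeVerts.mpr ⟨e, hD he, Or.inl rfl⟩,
          mem_edgeVerts.mpr ⟨e, hD he, Or.inr rfl⟩⟩
      rw [prod_subset_pow (isingSpin V σ) A V hA,
        prod_edges (isingSpin V σ) V D hDe, ← Finset.prod_mul_distrib]
      exact Finset.prod_congr rfl (fun x _ => by rw [← pow_add])
    rw [Finset.sum_congr rfl (fun σ _ => hprod σ),
      sum_spins V (fun x => (if x ∈ A then 1 else 0) + edgeInd x D)]
    by_cases hcond : edgeBdry D = A
    · rw [if_pos hcond, if_pos ((bdry_eq_iff B D hD A hA).mp hcond)]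
    · rw [if_neg hcond, if_neg (fun hc => hcond ((bdry_eq_iff B D hD A hA).mpr hc))]
  rw [step1, Finset.sum_congr rfl (fun D hD => by rw [inner D hD]),
    Finset.sum_filter, Finset.mul_sum]
  refine Finset.sum_congr rfl (fun D _ => ?_)
  split_ifs <;> ring

end IsingHT

/-- High-temperature representation of Ising correlations:
`⟨σ_A⟩_{B,β} = Σ_{D⊂B, ∂D=A} (tanh β)^{|D|} / Σ_{D⊂B, ∂D=∅} (tanh β)^{|D|}`. -/
theorem ising_high_temperature_representation (d : ℕ)
    (B : Finset ((Fin d → ℤ) × (Fin d → ℤ))) (β : ℝ)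
    (hnn : ∀ e ∈ B, (∑ i, |e.1 i - e.2 i|) = 1)
    (A : Finset (Fin d → ℤ)) (hA : A ⊆ edgeVerts B) (hAeven : A.card % 2 = 0) :
    (∑ σ : {x // x ∈ edgeVerts B} → Bool,
        (∏ x ∈ A, isingSpin (edgeVerts B) σ x) *
          Real.exp (β * ∑ e ∈ B,
            isingSpin (edgeVerts B) σ e.1 * isingSpin (edgeVerts B) σ e.2)) /
      (∑ σ : {x // x ∈ edgeVerts B} → Bool,
          Real.exp (β * ∑ e ∈ B,
            isingSpin (edgeVerts B) σ e.1 * isingSpin (edgeVerts B) σ e.2)) =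
    (∑ D ∈ B.powerset.filter (fun D => edgeBdry D = A), Real.tanh β ^ D.card) /
      (∑ D ∈ B.powerset.filter (fun D => edgeBdry D = (∅ : Finset (Fin d → ℤ))),
        Real.tanh β ^ D.card) := by
  have hB : ∀ e ∈ B, e.1 ≠ e.2 := by
    intro e he hc
    have h1 := hnn e he
    rw [hc] at h1
    simp at h1
  have hnum := IsingHT.expand β B hB A hA
  have hden := IsingHT.expand β B hB ∅ (Finset.empty_subset _)
  simp only [Finset.prod_empty, one_mul] at hden
  have hC : (0:ℝ) < Real.cosh β ^ B.card * 2 ^ (edgeVerts B).card := by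
    have := Real.cosh_pos β
    positivity
  rw [hnum, hden, mul_div_mul_left _ _ hC.ne']
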